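/- Let n and s be integers with s ≥ 3 and n ≥ 2s + 3, and let F be a stable 3-graph with vertex set [n] that has property U(s, 2s+1), ν(∂F) = s + 1, and ν(∂F − {1}) = s + 1 (where ∂F − {1} denotes the edges of ∂F not containing 1). Let M = { {i+1, 2s+4−i} : 1 ≤ i ≤ s+1 }. Then for any two distinct e₁, e₂ ∈ M, no 3-element subset of e₁ ∪ e₂ is an edge of F. -/

import Mathlib

/-!
A maximum matching of `∂F - {1}` consists of `s + 1` disjoint pairs inside `[2, n]`. Fewer than
`k` of them meet `[2, k]`, and the remaining ones cannot all fit into `[k + 1, 2s + 3 - k]`, so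
some pair `u < v` of an edge of `F` has `u ≥ k + 1` and `v ≥ 2s + 4 - k`; by stability
`{1, k + 1, 2s + 4 - k} ∈ F` for every `k ≤ s + 1`. A triple `f ∈ F` inside the union `P` of the
`i`-th and `j`-th pairs of `M`, together with the `s - 1` triples for `k ≠ i, j`, would be `s`
edges covering all of `[2s + 3]` but the one vertex of `P \ f`, contradicting `U(s, 2s + 1)`.
-/

open Finset

/-- `F₁ ≺ F₂`: same size, and the `i`-th smallest element of `F₁` is at most
the `i`-th smallest element of `F₂`. -/
def PrecS (A B : Finset ℕ) : Prop :=
  A.card = B.card ∧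
    ∀ i, i < A.card → (A.sort (· ≤ ·)).getD i 0 ≤ (B.sort (· ≤ ·)).getD i 0

/-- A family of subsets of `[n] = {1,…,n}` is stable (shifted). -/
def IsStable (n : ℕ) (F : Finset (Finset ℕ)) : Prop :=
  ∀ A B : Finset ℕ, A ⊆ Finset.Icc 1 n → B ∈ F → PrecS A B → A ∈ F

/-- Property `U(s, q)`: any `s` edges (repetitions allowed) have union of size at most `q`. -/
def HasU (F : Finset (Finset ℕ)) (s q : ℕ) : Prop :=
  ∀ f : Fin s → Finset ℕ, (∀ i, f i ∈ F) → (Finset.univ.biUnion f).card ≤ q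

/-- Matching number: the maximum size of a set of pairwise disjoint edges of `F`. -/
def matchNum (F : Finset (Finset ℕ)) : ℕ :=
  (F.powerset.filter fun M => ∀ a ∈ M, ∀ b ∈ M, a ≠ b → Disjoint a b).sup Finset.card

/-- Shadow of a 3-uniform family: all 2-element subsets of its edges. -/
def shadow2 (F : Finset (Finset ℕ)) : Finset (Finset ℕ) :=
  F.biUnion fun f => f.powersetCard 2

/-- Deletion of the first `i` vertices: edges disjoint from `[i] = {1,…,i}`. -/
def del (F : Finset (Finset ℕ)) (i : ℕ) : Finset (Finset ℕ) :=
  F.filter fun e => Disjoint e (Finset.Icc 1 i)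

namespace Finset

variable {α : Type*}

section LinearOrder

variable [LinearOrder α]

theorem sort_triple {a b c : α} (hab : a < b) (hbc : b < c) :
    ({a, b, c} : Finset α).sort (· ≤ ·) = [a, b, c] := by
  rw [sort_insert _ (by simp [hab.le, (hab.trans hbc).le]) (by simp [hab.ne, (hab.trans hbc).ne]),
    sort_insert _ (by simp [hbc.le]) (by simp [hbc.ne]), sort_singleton]

theorem exists_lt_lt_eq_of_card_eq_three {g : Finset α} (h : g.card = 3) :
    ∃ x y z, x < y ∧ y < z ∧ g = {x, y, z} := by
  obtain ⟨x, y, z, hxyz⟩ := List.length_eq_three.mp ((g.length_sort (· ≤ ·)).trans h)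
  have hlt := List.sortedLT_iff_pairwise.mp g.sortedLT_sort
  rw [hxyz] at hlt
  obtain ⟨hx, hyz⟩ := List.pairwise_cons.mp hlt
  obtain ⟨hy, -⟩ := List.pairwise_cons.mp hyz
  refine ⟨x, y, z, hx y (by simp), hy z (by simp), ?_⟩
  ext a
  rw [← mem_sort (· ≤ ·), hxyz]
  simp

end LinearOrder

section PairwiseDisjoint

variable {Q : Finset (Finset α)} {t : Finset α}

theorem card_le_card_of_pairwiseDisjoint (hQ : (Q : Set (Finset α)).PairwiseDisjoint id)
    (ht : ∀ q ∈ Q, ∃ x ∈ q, x ∈ t) : Q.card ≤ t.card :=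
  card_le_card_of_forall_subsingleton (fun q x => x ∈ q)
    (fun q hq => (ht q hq).imp fun _ h => ⟨h.2, h.1⟩)
    (fun x _ _ hq₁ _ hq₂ => hQ.elim hq₁.1 hq₂.1 (not_disjoint_iff.mpr ⟨x, hq₁.2, hq₂.2⟩))

theorem card_mul_le_card_of_pairwiseDisjoint [DecidableEq α]
    (hQ : (Q : Set (Finset α)).PairwiseDisjoint id) {m : ℕ} (hm : ∀ q ∈ Q, q.card = m)
    (ht : ∀ q ∈ Q, q ⊆ t) : Q.card * m ≤ t.card := by
  calc Q.card * m = (Q.biUnion id).card := by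
        rw [card_biUnion hQ]; exact (sum_const_nat hm).symm
    _ ≤ t.card := card_le_card (biUnion_subset.mpr ht)

end PairwiseDisjoint

end Finset

theorem precS_triple {a b c x y z : ℕ} (hab : a < b) (hbc : b < c) (hxy : x < y) (hyz : y < z)
    (hax : a ≤ x) (hby : b ≤ y) (hcz : c ≤ z) : PrecS {a, b, c} {x, y, z} := by
  have hcard : ∀ {u v w : ℕ}, u < v → v < w → ({u, v, w} : Finset ℕ).card = 3 := fun h h' =>
    card_eq_three.mpr ⟨_, _, _, h.ne, (h.trans h').ne, h'.ne, rfl⟩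
  refine ⟨by rw [hcard hab hbc, hcard hxy hyz], fun i hi => ?_⟩
  rw [hcard hab hbc] at hi
  rw [sort_triple hab hbc, sort_triple hxy hyz]
  interval_cases i <;> simpa

theorem IsStable.one_insert_mem {n : ℕ} {F : Finset (Finset ℕ)}
    (hF : ∀ e ∈ F, e ⊆ Icc 1 n ∧ e.card = 3) (hst : IsStable n F) {g q : Finset ℕ}
    (hg : g ∈ F) (hqg : q ⊆ g) (hq : q.card = 2) {b c : ℕ} (h1b : 1 < b) (hbc : b < c)
    (hcn : c ≤ n) (hbq : ∀ u ∈ q, b ≤ u) (hcq : ∃ v ∈ q, c ≤ v) : {1, b, c} ∈ F := by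
  obtain ⟨v, hvq, hcv⟩ := hcq
  obtain ⟨u, huq, huv⟩ := exists_mem_ne (by omega : 1 < q.card) v
  obtain ⟨x, y, z, hxy, hyz, rfl⟩ := exists_lt_lt_eq_of_card_eq_three (hF g hg).2
  have h1x : 1 ≤ x := (mem_Icc.mp ((hF _ hg).1 (by simp))).1
  have hu := hqg huq
  have hv := hqg hvq
  have hbu := hbq u huq
  have hbv := hbq v hvq
  simp only [mem_insert, mem_singleton] at hu hv
  refine hst _ _ (fun w hw => ?_) hg (precS_triple h1b hbc hxy hyz h1x (by omega) (by omega))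
  simp only [mem_insert, mem_singleton] at hw
  rw [mem_Icc]
  omega

theorem exists_pairwiseDisjoint_card_eq_matchNum (P : Finset (Finset ℕ)) :
    ∃ Q ⊆ P, (Q : Set (Finset ℕ)).PairwiseDisjoint id ∧ Q.card = matchNum P := by
  obtain ⟨Q, hQ, hQsup⟩ := exists_mem_eq_sup
    (P.powerset.filter fun M => ∀ a ∈ M, ∀ b ∈ M, a ≠ b → Disjoint a b) ⟨∅, by simp⟩ card
  rw [mem_filter, mem_powerset] at hQ
  exact ⟨Q, hQ.1, fun a ha b hb hab => hQ.2 a ha b hb hab, hQsup.symm⟩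

theorem mem_shadow2 {F : Finset (Finset ℕ)} {q : Finset ℕ} :
    q ∈ shadow2 F ↔ q.card = 2 ∧ ∃ g ∈ F, q ⊆ g := by
  simp only [shadow2, mem_biUnion, mem_powersetCard]
  exact ⟨fun ⟨g, hg, hqg, hq⟩ => ⟨hq, g, hg, hqg⟩, fun ⟨hq, g, hg, hqg⟩ => ⟨g, hg, hqg, hq⟩⟩

theorem exists_pair_ge_of_pairwiseDisjoint {Q : Finset (Finset ℕ)} {m k : ℕ}
    (hQ : (Q : Set (Finset ℕ)).PairwiseDisjoint id) (h2 : ∀ q ∈ Q, q.card = 2)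
    (hge : ∀ q ∈ Q, ∀ x ∈ q, 2 ≤ x) (hm : Q.card = m) (hk : 1 ≤ k) (hkm : k ≤ m) :
    ∃ q ∈ Q, (∀ x ∈ q, k + 1 ≤ x) ∧ ∃ v ∈ q, 2 * m + 2 - k ≤ v := by
  have hlow : (Q.filter fun q => ¬∀ x ∈ q, k + 1 ≤ x).card ≤ (Icc 2 k).card := by
    refine card_le_card_of_pairwiseDisjoint (hQ.subset (coe_subset.mpr (filter_subset _ _)))
      fun q hq => ?_
    obtain ⟨hqQ, hqk⟩ := mem_filter.mp hq
    push Not at hqk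
    obtain ⟨x, hxq, hxk⟩ := hqk
    exact ⟨x, hxq, mem_Icc.mpr ⟨hge q hqQ x hxq, by omega⟩⟩
  have hsplit := card_filter_add_card_filter_not (s := Q) fun q => ∀ x ∈ q, k + 1 ≤ x
  by_contra! hhigh
  have hfit : (Q.filter fun q => ∀ x ∈ q, k + 1 ≤ x).card * 2 ≤
      (Icc (k + 1) (2 * m + 1 - k)).card := by
    refine card_mul_le_card_of_pairwiseDisjoint
      (hQ.subset (coe_subset.mpr (filter_subset _ _))) (fun q hq => h2 q (mem_filter.mp hq).1)
      fun q hq x hxq => ?_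
    obtain ⟨hqQ, hqk⟩ := mem_filter.mp hq
    have := hhigh q hqQ hqk x hxq
    exact mem_Icc.mpr ⟨hqk x hxq, by omega⟩
  rw [Nat.card_Icc] at hlow hfit
  omega

theorem one_insert_mem_of_matchNum_eq {n s : ℕ} (hn : 2 * s + 3 ≤ n) {F : Finset (Finset ℕ)}
    (hF : ∀ e ∈ F, e ⊆ Icc 1 n ∧ e.card = 3) (hst : IsStable n F)
    (hν : matchNum ((shadow2 F).filter fun e => 1 ∉ e) = s + 1) {k : ℕ}
    (hk : k ∈ Icc 1 (s + 1)) : ({1, k + 1, 2 * s + 4 - k} : Finset ℕ) ∈ F := by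
  obtain ⟨Q, hQP, hQ, hQcard⟩ := exists_pairwiseDisjoint_card_eq_matchNum
    ((shadow2 F).filter fun e => 1 ∉ e)
  have hQF : ∀ q ∈ Q, (q.card = 2 ∧ ∃ g ∈ F, q ⊆ g) ∧ 1 ∉ q := fun q hq => by
    simpa only [mem_filter, mem_shadow2] using hQP hq
  have hge : ∀ q ∈ Q, ∀ x ∈ q, 2 ≤ x := by
    intro q hq x hxq
    obtain ⟨⟨-, g, hg, hqg⟩, h1q⟩ := hQF q hq
    have := (mem_Icc.mp ((hF g hg).1 (hqg hxq))).1
    have : x ≠ 1 := by rintro rfl; exact h1q hxq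
    omega
  rw [mem_Icc] at hk
  obtain ⟨q, hq, hkq, hcq⟩ := exists_pair_ge_of_pairwiseDisjoint hQ
    (fun q hq => (hQF q hq).1.1) hge (hQcard.trans hν) hk.1 hk.2
  obtain ⟨⟨hq2, g, hg, hqg⟩, -⟩ := hQF q hq
  exact hst.one_insert_mem hF hg hqg hq2 (by omega) (by omega) (by omega) hkq
    (by simpa only [show 2 * (s + 1) + 2 - k = 2 * s + 4 - k by omega] using hcq)

theorem HasU.card_biUnion_le {F : Finset (Finset ℕ)} {s q : ℕ} (hU : HasU F s q)
    {T : Finset (Finset ℕ)} (hTF : T ⊆ F) (hTs : T.card ≤ s) : (T.biUnion id).card ≤ q := by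
  obtain rfl | ⟨t₀, ht₀⟩ := T.eq_empty_or_nonempty
  · simp
  let f : Fin s → Finset ℕ := fun i =>
    if h : (i : ℕ) < T.card then (T.equivFin.symm ⟨i, h⟩ : Finset ℕ) else t₀
  have hfT : ∀ i, f i ∈ T := fun i => by
    by_cases h : (i : ℕ) < T.card <;> simp [f, h, ht₀]
  refine (card_le_card fun x hx => ?_).trans (hU f fun i => hTF (hfT i))
  obtain ⟨t, ht, hxt⟩ := mem_biUnion.mp hx
  refine mem_biUnion.mpr ⟨Fin.castLE hTs (T.equivFin ⟨t, ht⟩), mem_univ _, ?_⟩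
  simpa [f] using hxt

theorem card_sub_one_le_card_sdiff_sdiff {α : Type*} [DecidableEq α] {t A f : Finset α}
    (hA : A.card ≤ 4) (hf : f ⊆ A) (hf3 : f.card = 3) : t.card - 1 ≤ (t \ (A \ f)).card := by
  have hAf : (A \ f).card ≤ 1 := by
    rw [card_sdiff_of_subset hf]
    omega
  have := le_card_sdiff (A \ f) t
  omega

theorem sdiff_subset_biUnion_insert_triples {s i j : ℕ} (hs : 2 ≤ s) (f : Finset ℕ) :
    Icc 1 (2 * s + 3) \ (({i + 1, 2 * s + 4 - i} ∪ {j + 1, 2 * s + 4 - j}) \ f) ⊆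
      (insert f ((Icc 1 (s + 1) \ {i, j}).image
        fun k => ({1, k + 1, 2 * s + 4 - k} : Finset ℕ))).biUnion id := by
  intro x hx
  simp only [mem_sdiff, mem_Icc, mem_union, mem_insert, mem_singleton, not_and_or,
    not_not] at hx
  by_cases hxf : x ∈ f
  · exact mem_biUnion.mpr ⟨f, mem_insert_self _ _, hxf⟩
  simp only [hxf, or_false] at hx
  suffices ∃ k ∈ Icc 1 (s + 1) \ {i, j}, x ∈ ({1, k + 1, 2 * s + 4 - k} : Finset ℕ) by
    obtain ⟨k, hk, hxk⟩ := this
    exact mem_biUnion.mpr ⟨_, mem_insert_of_mem (mem_image_of_mem _ hk), hxk⟩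
  by_cases hx1 : x = 1
  · obtain ⟨k, hk, hkij⟩ := exists_mem_notMem_of_card_lt_card
      ((card_le_two (a := i) (b := j)).trans_lt (by simp : 2 < (Icc 1 3).card))
    refine ⟨k, mem_sdiff.mpr ⟨?_, hkij⟩, by simp [hx1]⟩
    simp only [mem_Icc] at hk ⊢
    omega
  · refine ⟨if x ≤ s + 2 then x - 1 else 2 * s + 4 - x, ?_, ?_⟩ <;>
      simp only [mem_sdiff, mem_Icc, mem_insert, mem_singleton] <;> split_ifs <;> omega

theorem notMem_of_subset_union_pairs {F : Finset (Finset ℕ)} {s : ℕ} (hs : 2 ≤ s)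
    (hU : HasU F s (2 * s + 1))
    (htri : ∀ k ∈ Icc 1 (s + 1), ({1, k + 1, 2 * s + 4 - k} : Finset ℕ) ∈ F) {i j : ℕ}
    (hi : i ∈ Icc 1 (s + 1)) (hj : j ∈ Icc 1 (s + 1)) (hij : i ≠ j) {f : Finset ℕ}
    (hf : f ⊆ {i + 1, 2 * s + 4 - i} ∪ {j + 1, 2 * s + 4 - j}) (hf3 : f.card = 3) : f ∉ F := by
  intro hfF
  set S := Icc 1 (s + 1) \ {i, j}
  set T := insert f (S.image fun k => ({1, k + 1, 2 * s + 4 - k} : Finset ℕ))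
  have hTF : T ⊆ F := insert_subset hfF <| image_subset_iff.mpr fun k hk => htri k (sdiff_subset hk)
  have hS : S.card = s - 1 := by
    rw [card_sdiff_of_subset (insert_subset hi (singleton_subset_iff.mpr hj)), Nat.card_Icc,
      card_pair hij]
    omega
  have hTs : T.card ≤ s :=
    calc T.card ≤ (S.image fun k => ({1, k + 1, 2 * s + 4 - k} : Finset ℕ)).card + 1 :=
          card_insert_le _ _
      _ ≤ S.card + 1 := by gcongr; exact card_image_le
      _ = s := by omega
  have hcover : _ ≤ (T.biUnion id).card :=
    card_le_card (sdiff_subset_biUnion_insert_triples hs f)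
  have hcount := card_sub_one_le_card_sdiff_sdiff (t := Icc 1 (2 * s + 3))
    ((card_union_le _ _).trans (add_le_add card_le_two card_le_two)) hf hf3
  rw [Nat.card_Icc] at hcount
  have := hU.card_biUnion_le hTF hTs
  omega

theorem case2_claim1_general (n s : ℕ) (hs : 3 ≤ s) (hn : 2 * s + 3 ≤ n)
    (F : Finset (Finset ℕ))
    (hF : ∀ e ∈ F, e ⊆ Finset.Icc 1 n ∧ e.card = 3)
    (hst : IsStable n F)
    (hU : HasU F s (2 * s + 1))
    (hnus1 : matchNum ((shadow2 F).filter fun e => 1 ∉ e) = s + 1) :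
    ∀ e₁ ∈ (Finset.Icc 1 (s + 1)).image (fun i => ({i + 1, 2 * s + 4 - i} : Finset ℕ)),
      ∀ e₂ ∈ (Finset.Icc 1 (s + 1)).image (fun i => ({i + 1, 2 * s + 4 - i} : Finset ℕ)),
        e₁ ≠ e₂ → ∀ f : Finset ℕ, f ⊆ e₁ ∪ e₂ → f.card = 3 → f ∉ F := by
  intro e₁ he₁ e₂ he₂ hne f hf hf3
  obtain ⟨i, hi, rfl⟩ := mem_image.mp he₁
  obtain ⟨j, hj, rfl⟩ := mem_image.mp he₂
  exact notMem_of_subset_union_pairs (by omega) hU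
    (fun k hk => one_insert_mem_of_matchNum_eq hn hF hst hnus1 hk) hi hj
    (by rintro rfl; exact hne rfl) hf hf3

/-- Claim 1 of Case 2 in Lemma 3.5: for distinct e₁, e₂ in the matching
M = {{i+1, 2s+4-i} : 1 ≤ i ≤ s+1}, no triple inside e₁ ∪ e₂ is an edge of F. -/
theorem case2_claim1 (n s : ℕ) (hs : 3 ≤ s) (hn : 2 * s + 3 ≤ n)
    (F : Finset (Finset ℕ))
    (hF : ∀ e ∈ F, e ⊆ Finset.Icc 1 n ∧ e.card = 3)
    (hst : IsStable n F)
    (hU : HasU F s (2 * s + 1))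
    (hnus : matchNum (shadow2 F) = s + 1)
    (hnus1 : matchNum ((shadow2 F).filter fun e => 1 ∉ e) = s + 1) :
    ∀ e₁ ∈ (Finset.Icc 1 (s + 1)).image (fun i => ({i + 1, 2 * s + 4 - i} : Finset ℕ)),
      ∀ e₂ ∈ (Finset.Icc 1 (s + 1)).image (fun i => ({i + 1, 2 * s + 4 - i} : Finset ℕ)),
        e₁ ≠ e₂ → ∀ f : Finset ℕ, f ⊆ e₁ ∪ e₂ → f.card = 3 → f ∉ F :=
  case2_claim1_general n s hs hn F hF hst hU hnus1
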